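/- Let b_{1,2}(n) denote the total number of parts equal to 1 in the partitions pre_2(λ) as λ ranges over all binary partitions of n. Then b_{1,2}(1) = 0, b_{1,2}(2) = 1, and for every integer n ≥ 3, b_{1,2}(n) = b_{1,2}(n-1) + b_{1,2}(⌊(n+1)/2⌋) + b_{1,2}(⌈(n+1)/2⌉). -/

import Mathlib

open Finset
open scoped Classical

/-- The finset of binary partitions of `n` (all parts are powers of `2`). -/
noncomputable def binaryPartitions (n : ℕ) : Finset (Nat.Partition n) :=
  Finset.univ.filter fun π => ∀ i ∈ π.parts, ∃ k : ℕ, i = 2 ^ k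

/-- `pre₂(λ)`: the multiset of pairwise products `λ_i * λ_j` (over pairs of distinct
indices `i < j`) of the parts of the partition `λ`. -/
def pre2 {n : ℕ} (π : Nat.Partition n) : Multiset ℕ :=
  (π.parts.powersetCard 2).map Multiset.prod

/-- `b_{1,2}(n)`: the total number of parts equal to `1` in the partitions `pre₂(λ)`
as `λ` ranges over the binary partitions of `n`. -/
noncomputable def b12 (n : ℕ) : ℕ :=
  ∑ π ∈ binaryPartitions n, (pre2 π).count 1

/-! The number of parts `1` of `pre₂(λ)` is `C(c, 2)` with `c` the multiplicity of `1` in `λ`.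
Write `b n`, `h n`, `g n` for the sums of `1`, `c`, `C(c, 2)` over binary partitions of `n`.
Removing one part `1` matches the binary partitions of `n + 1` containing `1` with those of `n`,
and halving matches the binary partitions of `2m` without a part `1` with those of `m`; hence
`g (n+1) = g n + h n`, `h (n+1) = h n + b n`, and `b (n+1) = b n + [n+1 even] b ((n+1)/2)`.
These give `h (k+1) = b (2k+1)`, and then, by induction in steps of two,
`h m = g ⌊(m+2)/2⌋ + g ⌊(m+3)/2⌋`, which turns `g n = g (n-1) + h (n-1)` into the recurrence. -/

theorem Multiset.count_one_map_prod_powersetCard_two (s : Multiset ℕ) :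
    ((s.powersetCard 2).map Multiset.prod).count 1 = (s.count 1).choose 2 := by
  induction s using Multiset.induction_on with
  | empty => simp
  | cons a s ih =>
    have hpairs : ((s.powersetCard 1).map (a ::ₘ ·)).map Multiset.prod = s.map (a * ·) := by
      simp [Multiset.powersetCard_one, Multiset.map_map]
    rw [Multiset.powersetCard_cons, Multiset.map_add, Multiset.count_add, ih, hpairs]
    rcases eq_or_ne a 1 with rfl | ha
    · rw [Multiset.count_cons_self, Nat.choose_succ_succ', Nat.choose_one_right]
      simp only [one_mul, Multiset.map_id', add_comm]
    · have : 1 ∉ s.map (a * ·) := by simp [ha]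
      rw [Multiset.count_cons_of_ne ha.symm, Multiset.count_eq_zero.2 this, add_zero]

theorem count_one_pre2 {n : ℕ} (π : Nat.Partition n) :
    (pre2 π).count 1 = (π.parts.count 1).choose 2 :=
  Multiset.count_one_map_prod_powersetCard_two π.parts

theorem mem_binaryPartitions {n : ℕ} {π : Nat.Partition n} :
    π ∈ binaryPartitions n ↔ ∀ i ∈ π.parts, ∃ k : ℕ, i = 2 ^ k := by
  simp [binaryPartitions]

theorem card_binaryPartitions_zero : #(binaryPartitions 0) = 1 := by
  rw [show binaryPartitions 0 = univ from eq_univ_of_forall fun π => by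
    simp [mem_binaryPartitions], card_univ, Fintype.card_unique]

noncomputable def binaryPartitionsWithoutOne (n : ℕ) : Finset (Nat.Partition n) :=
  {π ∈ binaryPartitions n | 1 ∉ π.parts}

theorem sum_binaryPartitions_succ {M : Type*} [AddCommMonoid M] (f : ℕ → M) (n : ℕ) :
    ∑ π ∈ binaryPartitions (n + 1), f (π.parts.count 1) =
      ∑ μ ∈ binaryPartitions n, f (μ.parts.count 1 + 1) +
        #(binaryPartitionsWithoutOne (n + 1)) • f 0 := by
  let e := Nat.Partition.partitionWithPartEquiv (n := n + 1) le_rfl (by omega)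
  rw [← sum_filter_add_sum_filter_not _ (fun π => 1 ∈ π.parts)]
  congr 1
  · refine sum_bij' (fun π hπ => e ⟨π, (mem_filter.1 hπ).2⟩) (fun μ _ => (e.symm μ).1)
      ?_ ?_ (fun π _ => by simp [e]) (fun μ _ => by simp [e]) ?_
    · intro π hπ
      simp only [mem_binaryPartitions, e, Nat.Partition.partitionWithPartEquiv_apply_parts]
      exact fun i hi => mem_binaryPartitions.1 (mem_filter.1 hπ).1 i (Multiset.mem_of_mem_erase hi)
    · intro μ hμ
      simp only [mem_filter, mem_binaryPartitions, e,
        Nat.Partition.partitionWithPartEquiv_symm_apply_parts, Multiset.mem_cons]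
      refine ⟨?_, by simp⟩
      rintro i (rfl | hi)
      · exact ⟨0, rfl⟩
      · exact mem_binaryPartitions.1 hμ i hi
    · intro π hπ
      simp only [e, Nat.Partition.partitionWithPartEquiv_apply_parts]
      rw [Multiset.count_erase_self, Nat.sub_add_cancel
        (Multiset.one_le_count_iff_mem.2 (mem_filter.1 hπ).2)]
  · rw [binaryPartitionsWithoutOne, ← sum_const]
    exact sum_congr rfl fun π hπ => by rw [Multiset.count_eq_zero.2 (mem_filter.1 hπ).2]

namespace Nat.Partition

def double {m : ℕ} (μ : m.Partition) : (2 * m).Partition where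
  parts := μ.parts.map (2 * ·)
  parts_pos hi := by
    obtain ⟨x, hx, rfl⟩ := Multiset.mem_map.1 hi
    exact Nat.mul_pos two_pos (μ.parts_pos hx)
  parts_sum := by rw [Multiset.sum_map_mul_left, Multiset.map_id', μ.parts_sum]

def halve {m : ℕ} (π : (2 * m).Partition) (h : ∀ i ∈ π.parts, 2 ∣ i) : m.Partition where
  parts := π.parts.map (· / 2)
  parts_pos hi := by
    obtain ⟨x, hx, rfl⟩ := Multiset.mem_map.1 hi
    exact Nat.div_pos (Nat.le_of_dvd (π.parts_pos hx) (h x hx)) two_pos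
  parts_sum := by
    have : 2 * (π.parts.map (· / 2)).sum = 2 * m := by
      rw [← Multiset.sum_map_mul_left,
        Multiset.map_congr rfl fun x hx => Nat.mul_div_cancel' (h x hx), Multiset.map_id',
        π.parts_sum]
    omega

theorem double_halve {m : ℕ} (π : (2 * m).Partition) (h : ∀ i ∈ π.parts, 2 ∣ i) :
    (π.halve h).double = π := by
  ext1
  simp only [double, halve, Multiset.map_map]
  exact (Multiset.map_congr rfl fun x hx => Nat.mul_div_cancel' (h x hx)).trans π.parts.map_id'

theorem halve_double {m : ℕ} (μ : m.Partition) (h : ∀ i ∈ μ.double.parts, 2 ∣ i) :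
    μ.double.halve h = μ := by
  ext1
  simp [double, halve, Multiset.map_map]

end Nat.Partition

theorem two_dvd_of_mem_binaryPartitionsWithoutOne {n : ℕ} {π : n.Partition}
    (hπ : π ∈ binaryPartitionsWithoutOne n) {i : ℕ} (hi : i ∈ π.parts) : 2 ∣ i := by
  obtain ⟨hbin, hone⟩ := mem_filter.1 hπ
  obtain ⟨k, rfl⟩ := mem_binaryPartitions.1 hbin i hi
  obtain _ | k := k
  · exact absurd hi hone
  · exact dvd_pow_self 2 k.succ_ne_zero

theorem binaryPartitionsWithoutOne_two_mul_add_one (m : ℕ) :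
    binaryPartitionsWithoutOne (2 * m + 1) = ∅ := by
  refine eq_empty_of_forall_notMem fun π hπ => ?_
  have : 2 ∣ π.parts.sum :=
    Multiset.dvd_sum fun i hi => two_dvd_of_mem_binaryPartitionsWithoutOne hπ hi
  rw [π.parts_sum] at this
  omega

theorem card_binaryPartitionsWithoutOne_two_mul (m : ℕ) :
    #(binaryPartitionsWithoutOne (2 * m)) = #(binaryPartitions m) := by
  refine card_bij' (fun π hπ => π.halve fun i => two_dvd_of_mem_binaryPartitionsWithoutOne hπ)
    (fun μ _ => μ.double) ?_ ?_ (fun π _ => π.double_halve _) (fun μ _ => μ.halve_double _)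
  · intro π hπ
    rw [mem_binaryPartitions]
    intro i hi
    obtain ⟨x, hx, rfl⟩ := Multiset.mem_map.1 hi
    obtain ⟨k, rfl⟩ := mem_binaryPartitions.1 (mem_filter.1 hπ).1 x hx
    obtain _ | k := k
    · exact absurd hx (mem_filter.1 hπ).2
    · exact ⟨k, by rw [pow_succ, Nat.mul_div_cancel _ two_pos]⟩
  · intro μ hμ
    refine mem_filter.2 ⟨mem_binaryPartitions.2 fun i hi => ?_, fun h1 => ?_⟩
    · obtain ⟨x, hx, rfl⟩ := Multiset.mem_map.1 hi
      obtain ⟨k, rfl⟩ := mem_binaryPartitions.1 hμ x hx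
      exact ⟨k + 1, by rw [pow_succ']⟩
    · obtain ⟨x, -, hx⟩ := Multiset.mem_map.1 h1
      omega

noncomputable def onesCount (n : ℕ) : ℕ :=
  ∑ π ∈ binaryPartitions n, π.parts.count 1

noncomputable def onePairsCount (n : ℕ) : ℕ :=
  ∑ π ∈ binaryPartitions n, (π.parts.count 1).choose 2

theorem b12_eq_onePairsCount (n : ℕ) : b12 n = onePairsCount n :=
  sum_congr rfl fun π _ => count_one_pre2 π

theorem card_binaryPartitions_succ (n : ℕ) :
    #(binaryPartitions (n + 1)) =
      #(binaryPartitions n) + #(binaryPartitionsWithoutOne (n + 1)) := by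
  rw [card_eq_sum_ones, card_eq_sum_ones, sum_binaryPartitions_succ (fun _ => 1), smul_eq_mul,
    mul_one]

theorem onesCount_succ (n : ℕ) : onesCount (n + 1) = onesCount n + #(binaryPartitions n) := by
  rw [onesCount, onesCount, sum_binaryPartitions_succ (fun c => c), smul_zero, add_zero,
    sum_add_distrib, card_eq_sum_ones]

theorem onePairsCount_succ (n : ℕ) : onePairsCount (n + 1) = onePairsCount n + onesCount n := by
  rw [onePairsCount, onePairsCount, onesCount, sum_binaryPartitions_succ (·.choose 2)]
  simp only [Nat.choose_succ_succ', Nat.choose_one_right, Nat.choose_zero_succ, smul_zero,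
    add_zero, sum_add_distrib]
  exact add_comm _ _

theorem onesCount_zero : onesCount 0 = 0 := by
  simp [onesCount]

theorem onePairsCount_zero : onePairsCount 0 = 0 := by
  simp [onePairsCount]

theorem onePairsCount_one : onePairsCount 1 = 0 := by
  rw [onePairsCount_succ, onePairsCount_zero, onesCount_zero]

theorem onesCount_one : onesCount 1 = 1 := by
  rw [onesCount_succ, onesCount_zero, card_binaryPartitions_zero]

theorem onePairsCount_two : onePairsCount 2 = 1 := by
  rw [onePairsCount_succ, onePairsCount_one, onesCount_one]

theorem card_binaryPartitions_two_mul_add_one (m : ℕ) :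
    #(binaryPartitions (2 * m + 1)) = #(binaryPartitions (2 * m)) := by
  rw [card_binaryPartitions_succ, binaryPartitionsWithoutOne_two_mul_add_one, card_empty, add_zero]

theorem card_binaryPartitions_two_mul_add_two (m : ℕ) :
    #(binaryPartitions (2 * m + 2)) =
      #(binaryPartitions (2 * m + 1)) + #(binaryPartitions (m + 1)) := by
  rw [card_binaryPartitions_succ (2 * m + 1), ← card_binaryPartitionsWithoutOne_two_mul (m + 1)]
  rfl

theorem onesCount_succ_eq_card (k : ℕ) : onesCount (k + 1) = #(binaryPartitions (2 * k + 1)) := by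
  induction k with
  | zero =>
    rw [onesCount_one, card_binaryPartitions_two_mul_add_one, mul_zero, card_binaryPartitions_zero]
  | succ k ih =>
    rw [onesCount_succ, ih, card_binaryPartitions_two_mul_add_one (k + 1), mul_add_one,
      card_binaryPartitions_two_mul_add_two]

theorem card_binaryPartitions_add_card_succ (m : ℕ) :
    #(binaryPartitions m) + #(binaryPartitions (m + 1)) =
      onesCount ((m + 2) / 2) + onesCount ((m + 3) / 2) := by
  obtain ⟨k, rfl | rfl⟩ := Nat.even_or_odd' m
  · rw [show (2 * k + 2) / 2 = k + 1 by omega, show (2 * k + 3) / 2 = k + 1 by omega,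
      onesCount_succ_eq_card, ← card_binaryPartitions_two_mul_add_one]
  · rw [show (2 * k + 1 + 2) / 2 = k + 1 by omega, show (2 * k + 1 + 3) / 2 = k + 1 + 1 by omega,
      onesCount_succ_eq_card, onesCount_succ_eq_card, card_binaryPartitions_two_mul_add_one (k + 1)]
    rfl

theorem onesCount_eq_onePairsCount_add (m : ℕ) :
    onesCount m = onePairsCount ((m + 2) / 2) + onePairsCount ((m + 3) / 2) := by
  induction m using Nat.twoStepInduction with
  | zero => rw [onesCount_zero, onePairsCount_one]
  | one => rw [onesCount_one, onePairsCount_one, onePairsCount_two]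
  | more m ih _ =>
    rw [show (m + 2 + 2) / 2 = (m + 2) / 2 + 1 by omega,
      show (m + 2 + 3) / 2 = (m + 3) / 2 + 1 by omega, onePairsCount_succ, onePairsCount_succ,
      onesCount_succ, onesCount_succ, add_assoc, card_binaryPartitions_add_card_succ, ih]
    ring

theorem b12_recurrence :
    b12 1 = 0 ∧ b12 2 = 1 ∧
      ∀ n : ℕ, 3 ≤ n → b12 n = b12 (n - 1) + b12 ((n + 1) / 2) + b12 ((n + 2) / 2) := by
  simp only [b12_eq_onePairsCount]
  refine ⟨onePairsCount_one, onePairsCount_two, fun n hn => ?_⟩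
  obtain ⟨m, rfl⟩ : ∃ m, n = m + 1 := ⟨n - 1, by omega⟩
  rw [onePairsCount_succ, onesCount_eq_onePairsCount_add, Nat.add_sub_cancel, add_assoc]
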